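/- arXiv:math/0309378 — 2 statements merged into one kernel-verified Lean document; each statement's English description precedes it below -/
import Mathlib

section
/- Let K be a field and let A : W₁ ⊕ W₂ → V₁ ⊕ V₂, B : U₁ ⊕ U₂ → W₁ ⊕ W₂ be block upper triangular linear maps with blocks A₁₁, A₂₁, A₂₂ and B₁₁, B₂₁, B₂₂ satisfying A ∘ B = 0. Assume the quotient complex is exact: ker A₂₂ = im B₂₂. Then the map ψ̄ : ker A / im B → ker A₁₁ / im B₁₁ induced by (w₁, w₂) ↦ w₁ - B₂₁ u₂ (where B₂₂ u₂ = w₂) is injective. -/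
/-!
Let `(w₁, w₂) ∈ ker A` map to zero. Exactness of the quotient complex gives `u₂` with
`B₂₂ u₂ = w₂`; then `w₁ - B₂₁ u₂ ∈ ker A₁₁` because the off-diagonal block
`A₁₁ B₂₁ + A₂₁ B₂₂` of `A B = 0` vanishes, and `ψ̄ [w] = 0` gives `u₁` with `B₁₁ u₁ = w₁ - B₂₁ u₂`; then
`B (u₁, u₂) = (w₁, w₂)`, so `[w] = 0`.
-/

section BlockTriangular

variable {R U₁ U₂ W₁ W₂ V₁ V₂ : Type*} [Ring R]
  [AddCommGroup U₁] [AddCommGroup U₂] [AddCommGroup W₁] [AddCommGroup W₂]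
  [AddCommGroup V₁] [AddCommGroup V₂]
  [Module R U₁] [Module R U₂] [Module R W₁] [Module R W₂] [Module R V₁] [Module R V₂]
  {A₁₁ : W₁ →ₗ[R] V₁} {A₂₁ : W₂ →ₗ[R] V₁} {A₂₂ : W₂ →ₗ[R] V₂}
  {B₁₁ : U₁ →ₗ[R] W₁} {B₂₁ : U₂ →ₗ[R] W₁} {B₂₂ : U₂ →ₗ[R] W₂}
  {A : (W₁ × W₂) →ₗ[R] V₁ × V₂} {B : (U₁ × U₂) →ₗ[R] W₁ × W₂}

theorem mem_ker_iff_of_blockTriangular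
    (hA : ∀ w₁ w₂, A (w₁, w₂) = (A₁₁ w₁ + A₂₁ w₂, A₂₂ w₂)) {w : W₁ × W₂} :
    w ∈ LinearMap.ker A ↔ A₁₁ w.1 + A₂₁ w.2 = 0 ∧ A₂₂ w.2 = 0 := by
  rw [LinearMap.mem_ker, ← Prod.mk.eta (p := w), hA, Prod.mk_eq_zero]

theorem offDiag_comp_add_eq_zero
    (hA : ∀ w₁ w₂, A (w₁, w₂) = (A₁₁ w₁ + A₂₁ w₂, A₂₂ w₂))
    (hB : ∀ u₁ u₂, B (u₁, u₂) = (B₁₁ u₁ + B₂₁ u₂, B₂₂ u₂))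
    (hAB : A ∘ₗ B = 0) (u₂ : U₂) : A₁₁ (B₂₁ u₂) + A₂₁ (B₂₂ u₂) = 0 := by
  have h : B (0, u₂) ∈ LinearMap.ker A := LinearMap.congr_fun hAB (0, u₂)
  simpa [hB] using ((mem_ker_iff_of_blockTriangular hA).1 h).1

theorem fst_sub_mem_ker_of_mem_ker
    (hA : ∀ w₁ w₂, A (w₁, w₂) = (A₁₁ w₁ + A₂₁ w₂, A₂₂ w₂))
    (hB : ∀ u₁ u₂, B (u₁, u₂) = (B₁₁ u₁ + B₂₁ u₂, B₂₂ u₂))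
    (hAB : A ∘ₗ B = 0) {w : W₁ × W₂} (hw : w ∈ LinearMap.ker A) {u₂ : U₂}
    (hu₂ : B₂₂ u₂ = w.2) : w.1 - B₂₁ u₂ ∈ LinearMap.ker A₁₁ := by
  have hw₁ := ((mem_ker_iff_of_blockTriangular hA).1 hw).1
  have hu := offDiag_comp_add_eq_zero hA hB hAB u₂
  rw [hu₂] at hu
  rw [LinearMap.mem_ker, map_sub, sub_eq_zero]
  exact add_right_cancel (hw₁.trans hu.symm)

theorem apply_eq_of_fst_sub_eq
    (hB : ∀ u₁ u₂, B (u₁, u₂) = (B₁₁ u₁ + B₂₁ u₂, B₂₂ u₂))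
    {w : W₁ × W₂} {u₁ : U₁} {u₂ : U₂} (hu₂ : B₂₂ u₂ = w.2)
    (hu₁ : B₁₁ u₁ = w.1 - B₂₁ u₂) : B (u₁, u₂) = w := by
  rw [hB, hu₁, hu₂, sub_add_cancel]

end BlockTriangular

theorem stmt2 (K : Type*) [Field K]
    (U₁ U₂ W₁ W₂ V₁ V₂ : Type*)
    [AddCommGroup U₁] [AddCommGroup U₂] [AddCommGroup W₁] [AddCommGroup W₂]
    [AddCommGroup V₁] [AddCommGroup V₂]
    [Module K U₁] [Module K U₂] [Module K W₁] [Module K W₂] [Module K V₁] [Module K V₂]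
    (A₁₁ : W₁ →ₗ[K] V₁) (A₂₁ : W₂ →ₗ[K] V₁) (A₂₂ : W₂ →ₗ[K] V₂)
    (B₁₁ : U₁ →ₗ[K] W₁) (B₂₁ : U₂ →ₗ[K] W₁) (B₂₂ : U₂ →ₗ[K] W₂)
    (A : (W₁ × W₂) →ₗ[K] V₁ × V₂) (B : (U₁ × U₂) →ₗ[K] W₁ × W₂)
    (hA : ∀ w₁ w₂, A (w₁, w₂) = (A₁₁ w₁ + A₂₁ w₂, A₂₂ w₂))
    (hB : ∀ u₁ u₂, B (u₁, u₂) = (B₁₁ u₁ + B₂₁ u₂, B₂₂ u₂))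
    (hAB : A ∘ₗ B = 0)
    (hexact : LinearMap.ker A₂₂ = LinearMap.range B₂₂)
    :
    ∀ ψ : (LinearMap.ker A ⧸ (LinearMap.range B).comap (LinearMap.ker A).subtype) →ₗ[K]
          (LinearMap.ker A₁₁ ⧸ (LinearMap.range B₁₁).comap (LinearMap.ker A₁₁).subtype),
      (∀ (w : LinearMap.ker A) (u₂ : U₂), B₂₂ u₂ = (w : W₁ × W₂).2 →
        ∀ (h : (w : W₁ × W₂).1 - B₂₁ u₂ ∈ LinearMap.ker A₁₁),
          ψ (Submodule.Quotient.mk w) =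
            Submodule.Quotient.mk ⟨(w : W₁ × W₂).1 - B₂₁ u₂, h⟩) →
      Function.Injective ψ := by
  intro ψ hψ
  rw [injective_iff_map_eq_zero]
  rintro z hz
  obtain ⟨w, rfl⟩ := Submodule.Quotient.mk_surjective _ z
  have hw₂ : (w : W₁ × W₂).2 ∈ LinearMap.ker A₂₂ :=
    ((mem_ker_iff_of_blockTriangular hA).1 w.2).2
  obtain ⟨u₂, hu₂⟩ : (w : W₁ × W₂).2 ∈ LinearMap.range B₂₂ := hexact ▸ hw₂
  have hmem := fst_sub_mem_ker_of_mem_ker hA hB hAB w.2 hu₂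
  rw [hψ w u₂ hu₂ hmem, Submodule.Quotient.mk_eq_zero] at hz
  obtain ⟨u₁, hu₁⟩ := hz
  exact (Submodule.Quotient.mk_eq_zero _).2
    ⟨(u₁, u₂), apply_eq_of_fst_sub_eq hB hu₂ hu₁⟩
end

section
/- Let K be a field and let A : W₁ ⊕ W₂ → V₁ ⊕ V₂, B : U₁ ⊕ U₂ → W₁ ⊕ W₂ be block upper triangular linear maps with A ∘ B = 0 and with the quotient complex exact (ker A₂₂ = im B₂₂). If moreover the K-vector spaces ker A / im B and ker A₁₁ / im B₁₁ are finite-dimensional of the same dimension, then the induced map ψ̄ : ker A / im B → ker A₁₁ / im B₁₁ is an isomorphism of K-vector spaces. -/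
/-!
Given a cocycle `w = (w₁, w₂)` of the total complex, exactness of the quotient complex writes
`w₂ = B₂₂ u₂`, and subtracting the coboundary `B (0, u₂)` leaves the cocycle `(w₁ - B₂₁ u₂, 0)`
of the subcomplex. If that class vanishes, `w₁ - B₂₁ u₂ = B₁₁ u₁` and `w = B (u₁, u₂)`; so `ψ̄`
is injective, hence bijective between spaces of the same finite dimension.
-/

open LinearMap

section BlockTriangular

variable {R U₁ U₂ W₁ W₂ V₁ V₂ : Type*} [Ring R]
  [AddCommGroup U₁] [AddCommGroup U₂] [AddCommGroup W₁] [AddCommGroup W₂]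
  [AddCommGroup V₁] [AddCommGroup V₂]
  [Module R U₁] [Module R U₂] [Module R W₁] [Module R W₂] [Module R V₁] [Module R V₂]
  {A₁₁ : W₁ →ₗ[R] V₁} {A₂₁ : W₂ →ₗ[R] V₁} {A₂₂ : W₂ →ₗ[R] V₂}
  {B₁₁ : U₁ →ₗ[R] W₁} {B₂₁ : U₂ →ₗ[R] W₁} {B₂₂ : U₂ →ₗ[R] W₂}
  {A : (W₁ × W₂) →ₗ[R] V₁ × V₂} {B : (U₁ × U₂) →ₗ[R] W₁ × W₂}

theorem sub_mem_ker_of_comp_eq_zero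
    (hA : ∀ w₁ w₂, A (w₁, w₂) = (A₁₁ w₁ + A₂₁ w₂, A₂₂ w₂))
    (hB : ∀ u₁ u₂, B (u₁, u₂) = (B₁₁ u₁ + B₂₁ u₂, B₂₂ u₂))
    (hAB : A ∘ₗ B = 0) {w : W₁ × W₂} (hw : w ∈ ker A) {u₂ : U₂} (hu₂ : B₂₂ u₂ = w.2) :
    w.1 - B₂₁ u₂ ∈ ker A₁₁ := by
  have hBu : B (0, u₂) = (B₂₁ u₂, w.2) := by rw [hB, map_zero, zero_add, hu₂]
  have hcocycle : A (w.1 - B₂₁ u₂, 0) = 0 := by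
    rw [← sub_self w.2, ← Prod.mk_sub_mk, ← hBu, map_sub, ← comp_apply, hAB, mem_ker.mp hw,
      LinearMap.zero_apply, sub_zero]
  simpa [hA] using hcocycle

theorem injective_of_ker_eq_range
    (hA : ∀ w₁ w₂, A (w₁, w₂) = (A₁₁ w₁ + A₂₁ w₂, A₂₂ w₂))
    (hB : ∀ u₁ u₂, B (u₁, u₂) = (B₁₁ u₁ + B₂₁ u₂, B₂₂ u₂))
    (hAB : A ∘ₗ B = 0) (hexact : ker A₂₂ = range B₂₂)
    (ψ : (ker A ⧸ (range B).comap (ker A).subtype) →ₗ[R]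
      (ker A₁₁ ⧸ (range B₁₁).comap (ker A₁₁).subtype))
    (hψ : ∀ (w : ker A) (u₂ : U₂), B₂₂ u₂ = (w : W₁ × W₂).2 →
      ∀ (h : (w : W₁ × W₂).1 - B₂₁ u₂ ∈ ker A₁₁),
        ψ (Submodule.Quotient.mk w) = Submodule.Quotient.mk ⟨(w : W₁ × W₂).1 - B₂₁ u₂, h⟩) :
    Function.Injective ψ := by
  refine (injective_iff_map_eq_zero ψ).mpr fun x hx ↦ ?_
  obtain ⟨w, rfl⟩ := Submodule.Quotient.mk_surjective _ x
  have hw₂ : (w : W₁ × W₂).2 ∈ ker A₂₂ := by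
    simpa [hA] using congrArg Prod.snd (mem_ker.mp w.2)
  obtain ⟨u₂, hu₂⟩ := hexact ▸ hw₂
  have hk := sub_mem_ker_of_comp_eq_zero hA hB hAB w.2 hu₂
  rw [hψ w u₂ hu₂ hk, Submodule.Quotient.mk_eq_zero] at hx
  obtain ⟨u₁, hu₁⟩ := hx
  rw [Submodule.Quotient.mk_eq_zero]
  refine ⟨(u₁, u₂), ?_⟩
  rw [hB, show B₁₁ u₁ = (w : W₁ × W₂).1 - B₂₁ u₂ from hu₁, sub_add_cancel, hu₂]
  rfl

end BlockTriangular

theorem LinearMap.surjective_of_injective_of_finrank_eq {K V V' : Type*} [DivisionRing K]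
    [AddCommGroup V] [AddCommGroup V'] [Module K V] [Module K V'] [FiniteDimensional K V']
    (h : Module.finrank K V = Module.finrank K V') {f : V →ₗ[K] V'}
    (hf : Function.Injective f) : Function.Surjective f :=
  range_eq_top.mp <| Submodule.eq_top_of_finrank_eq <| (finrank_range_of_inj hf).trans h

theorem stmt3_general (K : Type*) [Field K]
    (U₁ U₂ W₁ W₂ V₁ V₂ : Type*)
    [AddCommGroup U₁] [AddCommGroup U₂] [AddCommGroup W₁] [AddCommGroup W₂]
    [AddCommGroup V₁] [AddCommGroup V₂]
    [Module K U₁] [Module K U₂] [Module K W₁] [Module K W₂] [Module K V₁] [Module K V₂]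
    (A₁₁ : W₁ →ₗ[K] V₁) (A₂₁ : W₂ →ₗ[K] V₁) (A₂₂ : W₂ →ₗ[K] V₂)
    (B₁₁ : U₁ →ₗ[K] W₁) (B₂₁ : U₂ →ₗ[K] W₁) (B₂₂ : U₂ →ₗ[K] W₂)
    (A : (W₁ × W₂) →ₗ[K] V₁ × V₂) (B : (U₁ × U₂) →ₗ[K] W₁ × W₂)
    (hA : ∀ w₁ w₂, A (w₁, w₂) = (A₁₁ w₁ + A₂₁ w₂, A₂₂ w₂))
    (hB : ∀ u₁ u₂, B (u₁, u₂) = (B₁₁ u₁ + B₂₁ u₂, B₂₂ u₂))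
    (hAB : A ∘ₗ B = 0)
    (hexact : LinearMap.ker A₂₂ = LinearMap.range B₂₂)
    [FiniteDimensional K
      (LinearMap.ker A₁₁ ⧸ (LinearMap.range B₁₁).comap (LinearMap.ker A₁₁).subtype)]
    (hdim : Module.finrank K
        (LinearMap.ker A ⧸ (LinearMap.range B).comap (LinearMap.ker A).subtype) =
      Module.finrank K
        (LinearMap.ker A₁₁ ⧸ (LinearMap.range B₁₁).comap (LinearMap.ker A₁₁).subtype)) :
    ∀ ψ : (LinearMap.ker A ⧸ (LinearMap.range B).comap (LinearMap.ker A).subtype) →ₗ[K]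
          (LinearMap.ker A₁₁ ⧸ (LinearMap.range B₁₁).comap (LinearMap.ker A₁₁).subtype),
      (∀ (w : LinearMap.ker A) (u₂ : U₂), B₂₂ u₂ = (w : W₁ × W₂).2 →
        ∀ (h : (w : W₁ × W₂).1 - B₂₁ u₂ ∈ LinearMap.ker A₁₁),
          ψ (Submodule.Quotient.mk w) =
            Submodule.Quotient.mk ⟨(w : W₁ × W₂).1 - B₂₁ u₂, h⟩) →
      Function.Bijective ψ := by
  intro ψ hψ
  have hinj := injective_of_ker_eq_range hA hB hAB hexact ψ hψ
  exact ⟨hinj, surjective_of_injective_of_finrank_eq hdim hinj⟩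

theorem stmt3 (K : Type*) [Field K]
    (U₁ U₂ W₁ W₂ V₁ V₂ : Type*)
    [AddCommGroup U₁] [AddCommGroup U₂] [AddCommGroup W₁] [AddCommGroup W₂]
    [AddCommGroup V₁] [AddCommGroup V₂]
    [Module K U₁] [Module K U₂] [Module K W₁] [Module K W₂] [Module K V₁] [Module K V₂]
    (A₁₁ : W₁ →ₗ[K] V₁) (A₂₁ : W₂ →ₗ[K] V₁) (A₂₂ : W₂ →ₗ[K] V₂)
    (B₁₁ : U₁ →ₗ[K] W₁) (B₂₁ : U₂ →ₗ[K] W₁) (B₂₂ : U₂ →ₗ[K] W₂)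
    (A : (W₁ × W₂) →ₗ[K] V₁ × V₂) (B : (U₁ × U₂) →ₗ[K] W₁ × W₂)
    (hA : ∀ w₁ w₂, A (w₁, w₂) = (A₁₁ w₁ + A₂₁ w₂, A₂₂ w₂))
    (hB : ∀ u₁ u₂, B (u₁, u₂) = (B₁₁ u₁ + B₂₁ u₂, B₂₂ u₂))
    (hAB : A ∘ₗ B = 0)
    (hexact : LinearMap.ker A₂₂ = LinearMap.range B₂₂)
    [FiniteDimensional K (LinearMap.ker A ⧸ (LinearMap.range B).comap (LinearMap.ker A).subtype)]
    [FiniteDimensional K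
      (LinearMap.ker A₁₁ ⧸ (LinearMap.range B₁₁).comap (LinearMap.ker A₁₁).subtype)]
    (hdim : Module.finrank K
        (LinearMap.ker A ⧸ (LinearMap.range B).comap (LinearMap.ker A).subtype) =
      Module.finrank K
        (LinearMap.ker A₁₁ ⧸ (LinearMap.range B₁₁).comap (LinearMap.ker A₁₁).subtype)) :
    ∀ ψ : (LinearMap.ker A ⧸ (LinearMap.range B).comap (LinearMap.ker A).subtype) →ₗ[K]
          (LinearMap.ker A₁₁ ⧸ (LinearMap.range B₁₁).comap (LinearMap.ker A₁₁).subtype),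
      (∀ (w : LinearMap.ker A) (u₂ : U₂), B₂₂ u₂ = (w : W₁ × W₂).2 →
        ∀ (h : (w : W₁ × W₂).1 - B₂₁ u₂ ∈ LinearMap.ker A₁₁),
          ψ (Submodule.Quotient.mk w) =
            Submodule.Quotient.mk ⟨(w : W₁ × W₂).1 - B₂₁ u₂, h⟩) →
      Function.Bijective ψ :=
  stmt3_general K U₁ U₂ W₁ W₂ V₁ V₂ A₁₁ A₂₁ A₂₂ B₁₁ B₂₁ B₂₂ A B hA hB hAB hexact hdim
end
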